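/- Let X be a countable set and σ a symmetric irreflexive binary relation on X such that the simple graph on X with adjacency σ is acyclic (so (X, σ) is an undirected forest). Then (X, σ) is unary FA-presentable if and only if there exists a binary relation η on X such that σ is the symmetric closure of η (σ x y ↔ η x y ∨ η y x), no pair satisfies both η x y and η y x, and (X, η) is unary FA-presentable (that is, (X, σ) is obtained from a unary FA-presentable directed forest by forgetting edge directions). -/

import Mathlib

/-!
A unary FA-presentable structure has an injective presentation. Indeed, for `m < n` the word
`conv(m, n)` has length `n`, so the set of `n` having a smaller representative of the same element
is the image of a regular convolution language under the letter map onto the one-letter alphabet,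
hence regular; deleting it from the domain keeps exactly the least representative of each element.
In an injective presentation, orienting every edge of `σ` from its smaller to its larger
representative gives `η`, presented by the presentation of `σ` intersected with the regular
relation `<`. Conversely, the symmetric closure of a regular relation is regular, since exchanging
the letters `l` and `r` turns `conv(m, n)` into `conv(n, m)`.
-/

/-- The convolution word of the pair `(m, n)`, over the three-letter alphabet `Fin 3`
(`0` plays the role of `s`, `1` of `l`, `2` of `r`). -/
def convWord (m n : ℕ) : List (Fin 3) :=
  List.replicate (min m n) 0 ++ List.replicate (m - min m n) 1 ++
    List.replicate (n - min m n) 2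

/-- The convolution language of a binary relation on `ℕ`. -/
def convLang (R : ℕ → ℕ → Prop) : Language (Fin 3) :=
  {w | ∃ m n, R m n ∧ w = convWord m n}

/-- A binary relation on `ℕ` is regular if its convolution language is regular. -/
def RegularRel (R : ℕ → ℕ → Prop) : Prop :=
  (convLang R).IsRegular
/-- The unary language over a one-letter alphabet associated to a set `L ⊆ ℕ`,
identifying `a^n` with `n`. -/
def unaryLang (L : Set ℕ) : Language Unit :=
  {w | w.length ∈ L}

/-- A (countable) structure `(X, ρ)` with one binary relation is unary FA-presentable
if there are a set `L ⊆ ℕ` whose unary language is regular and a surjection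
`φ : L → X` such that equality and the relation, pulled back along `φ`, are
regular relations. -/
def UnaryFAPresentable {X : Type*} (ρ : X → X → Prop) : Prop :=
  ∃ L : Set ℕ, (unaryLang L).IsRegular ∧
    ∃ φ : ℕ → X, (∀ x, ∃ n ∈ L, φ n = x) ∧
      RegularRel (fun m n => m ∈ L ∧ n ∈ L ∧ φ m = φ n) ∧
      RegularRel (fun m n => m ∈ L ∧ n ∈ L ∧ ρ (φ m) (φ n))

/-- The simple graph of a symmetric irreflexive relation. -/
def symGraph {X : Type*} (σ : X → X → Prop) (hs : Symmetric σ) (hi : Irreflexive σ) :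
    SimpleGraph X where
  Adj := σ
  symm := ⟨fun _ _ h => hs h⟩
  loopless := ⟨hi⟩

namespace DFA

variable {α β σ : Type*}

theorem evalFrom_replicate (M : DFA α σ) (s : σ) (a : α) (k : ℕ) :
    M.evalFrom s (List.replicate k a) = (M.step · a)^[k] s := by
  induction k generalizing s with
  | zero => rfl
  | succ k ih => exact ih (M.step s a)

def imageNFA (f : α → β) (M : DFA α σ) : NFA β σ where
  step s b := {t | ∃ a, f a = b ∧ M.step s a = t}
  start := {M.start}
  accept := M.accept

theorem mem_imageNFA_evalFrom (f : α → β) (M : DFA α σ) (s t : σ) (w : List β) :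
    t ∈ (M.imageNFA f).evalFrom {s} w ↔
      ∃ v : List α, v.map f = w ∧ M.evalFrom s v = t := by
  induction w generalizing s with
  | nil => simp [eq_comm]
  | cons b w ih =>
    rw [NFA.evalFrom_cons, NFA.stepSet_singleton, NFA.mem_evalFrom_iff_exists]
    constructor
    · rintro ⟨_, ⟨a, rfl, rfl⟩, h⟩
      obtain ⟨v, rfl, rfl⟩ := (ih _).1 h
      exact ⟨a :: v, rfl, rfl⟩
    · rintro ⟨_ | ⟨a, v⟩, hv, rfl⟩
      · cases hv
      · obtain ⟨rfl, rfl⟩ := List.cons_eq_cons.1 hv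
        exact ⟨_, ⟨a, rfl, rfl⟩, (ih _).2 ⟨v, rfl, rfl⟩⟩

theorem imageNFA_accepts (f : α → β) (M : DFA α σ) :
    (M.imageNFA f).accepts = Language.map f M.accepts := by
  ext w
  change (∃ t ∈ M.accept, t ∈ (M.imageNFA f).evalFrom {M.start} w) ↔
    w ∈ List.map f '' M.accepts
  simp only [mem_imageNFA_evalFrom]
  constructor
  · rintro ⟨_, ht, v, rfl, rfl⟩
    exact ⟨v, ht, rfl⟩
  · rintro ⟨v, hv, rfl⟩
    exact ⟨_, hv, v, rfl, rfl⟩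

end DFA

namespace Language

variable {α β : Type*}

theorem IsRegular.map {L : Language α} (f : α → β) (h : L.IsRegular) :
    (Language.map f L).IsRegular := by
  obtain ⟨σ, _, M, rfl⟩ := h
  classical
  exact ⟨_, inferInstance, (M.imageNFA f).toDFA, by simp [DFA.imageNFA_accepts]⟩

theorem IsRegular.preimage_map {L : Language β} (f : α → β) (h : L.IsRegular) :
    Language.IsRegular (List.map f ⁻¹' L : Language α) := by
  obtain ⟨σ, _, M, rfl⟩ := h
  exact ⟨σ, inferInstance, M.comap f, M.accepts_comap f⟩

theorem isRegular_setOf_mem [DecidableEq α] (a : α) :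
    Language.IsRegular ({w | a ∈ w} : Language α) := by
  let M : DFA α Bool := ⟨fun b x => b || decide (x = a), false, {true}⟩
  have hM : ∀ b w, M.evalFrom b w = (b || decide (a ∈ w)) := by
    intro b w
    induction w generalizing b with
    | nil => simp
    | cons x w ih =>
      rw [DFA.evalFrom_cons, ih]
      simp [M, eq_comm, Bool.or_assoc]
  refine ⟨Bool, inferInstance, M, ?_⟩
  ext w
  change M.evalFrom false w ∈ ({true} : Set Bool) ↔ a ∈ w
  simp [hM]

end Language

theorem length_convWord (m n : ℕ) : (convWord m n).length = max m n := by
  simp only [convWord, List.length_append, List.length_replicate]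
  omega

theorem count_convWord (m n : ℕ) :
    (convWord m n).count 0 = min m n ∧ (convWord m n).count 1 = m - min m n ∧
      (convWord m n).count 2 = n - min m n := by
  simp [convWord, List.count_replicate]

theorem convWord_inj {m n m' n' : ℕ} : convWord m n = convWord m' n' ↔ m = m' ∧ n = n' := by
  refine ⟨fun h => ?_, fun ⟨rfl, rfl⟩ => rfl⟩
  have h₁ := count_convWord m n
  have h₂ := count_convWord m' n'
  rw [h] at h₁
  omega

theorem convWord_mem_convLang {R : ℕ → ℕ → Prop} {m n : ℕ} :
    convWord m n ∈ convLang R ↔ R m n := by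
  constructor
  · rintro ⟨m', n', hR, h⟩
    obtain ⟨rfl, rfl⟩ := convWord_inj.1 h
    exact hR
  · exact fun hR => ⟨m, n, hR, rfl⟩

theorem map_swap_convWord (m n : ℕ) :
    (convWord m n).map (Equiv.swap (1 : Fin 3) 2) = convWord n m := by
  rcases le_total m n with h | h <;> simp [convWord, h, Equiv.swap_apply_of_ne_of_ne]

theorem mem_convLang_top_iff {w : List (Fin 3)} :
    w ∈ convLang (fun _ _ => True) ↔ ∃ k j a, w = List.replicate k 0 ++ List.replicate j a := by
  constructor
  · rintro ⟨m, n, -, rfl⟩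
    rcases le_total m n with h | h
    · exact ⟨m, n - m, 2, by simp [convWord, h]⟩
    · exact ⟨n, m - n, 1, by simp [convWord, h]⟩
  · rintro ⟨k, j, a, rfl⟩
    fin_cases a
    · exact ⟨k + j, k + j, trivial, by simp [convWord]⟩
    · exact ⟨k + j, k, trivial, by simp [convWord]⟩
    · exact ⟨k, k + j, trivial, by simp [convWord]⟩

-- The state is the last letter read (`0` initially), or `none` once the word has left
-- `0* (1* ∪ 2*)`.
def convShapeDFA : DFA (Fin 3) (Option (Fin 3)) where
  step q a := q.bind fun p => if p = 0 ∨ a = p then some a else none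
  start := some 0
  accept := {none}ᶜ

@[simp]
theorem convShapeDFA_step_some (p a : Fin 3) :
    convShapeDFA.step (some p) a = if p = 0 ∨ a = p then some a else none :=
  rfl

theorem convShapeDFA_evalFrom_none (w : List (Fin 3)) : convShapeDFA.evalFrom none w = none := by
  induction w with
  | nil => rfl
  | cons a w ih => exact ih

theorem convShapeDFA_evalFrom_replicate (a : Fin 3) (j : ℕ) :
    convShapeDFA.evalFrom (some a) (List.replicate j a) = some a := by
  induction j with
  | zero => rfl
  | succ j ih => simpa [List.replicate_succ] using ih

theorem eq_of_convShapeDFA_evalFrom_ne_none {p : Fin 3} (hp : p ≠ 0) {w : List (Fin 3)}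
    (h : convShapeDFA.evalFrom (some p) w ≠ none) : ∀ b ∈ w, b = p := by
  induction w with
  | nil => simp
  | cons a w ih =>
    by_cases ha : a = p
    · subst ha
      simpa using ih (by simpa using h)
    · simp [hp, ha, convShapeDFA_evalFrom_none] at h

theorem convShapeDFA_accepts : convShapeDFA.accepts = convLang (fun _ _ => True) := by
  ext w
  rw [mem_convLang_top_iff, DFA.mem_accepts]
  change convShapeDFA.evalFrom (some 0) w ≠ none ↔ _
  constructor
  · intro h
    induction w with
    | nil => exact ⟨0, 0, 0, rfl⟩
    | cons a w ih =>
      by_cases ha : a = 0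
      · subst ha
        obtain ⟨k, j, b, rfl⟩ := ih (by simpa using h)
        exact ⟨k + 1, j, b, rfl⟩
      · have hw := eq_of_convShapeDFA_evalFrom_ne_none ha (by simpa using h)
        refine ⟨0, w.length + 1, a, ?_⟩
        rw [List.replicate_zero, List.nil_append, List.replicate_succ,
          ← List.eq_replicate_iff.2 ⟨rfl, hw⟩]
  · rintro ⟨k, j, a, rfl⟩
    rw [DFA.evalFrom_of_append, convShapeDFA_evalFrom_replicate]
    cases j with
    | zero => simp
    | succ j => simp [List.replicate_succ, convShapeDFA_evalFrom_replicate]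

theorem isRegular_convLang_top : (convLang fun _ _ => True).IsRegular :=
  ⟨_, inferInstance, convShapeDFA, convShapeDFA_accepts⟩

theorem replicate_mem_unaryLang {L : Set ℕ} {k : ℕ} :
    List.replicate k () ∈ unaryLang L ↔ k ∈ L := by
  change (List.replicate k ()).length ∈ L ↔ k ∈ L
  rw [List.length_replicate]

def convPairDFA {σ₁ σ₂ : Type*} (M₁ : DFA Unit σ₁) (M₂ : DFA Unit σ₂) :
    DFA (Fin 3) (σ₁ × σ₂) where
  step q a := (if a = 2 then q.1 else M₁.step q.1 (), if a = 1 then q.2 else M₂.step q.2 ())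
  start := (M₁.start, M₂.start)
  accept := M₁.accept ×ˢ M₂.accept

theorem convPairDFA_eval_convWord {σ₁ σ₂ : Type*} (M₁ : DFA Unit σ₁) (M₂ : DFA Unit σ₂)
    (m n : ℕ) : (convPairDFA M₁ M₂).eval (convWord m n) =
      (M₁.eval (List.replicate m ()), M₂.eval (List.replicate n ())) := by
  have h₀ : ((convPairDFA M₁ M₂).step · 0) = Prod.map (M₁.step · ()) (M₂.step · ()) := rfl
  have h₁ : ((convPairDFA M₁ M₂).step · 1) = Prod.map (M₁.step · ()) id := rfl
  have h₂ : ((convPairDFA M₁ M₂).step · 2) = Prod.map id (M₂.step · ()) := rfl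
  simp only [DFA.eval, convWord, DFA.evalFrom_of_append, DFA.evalFrom_replicate, h₀, h₁, h₂,
    Prod.map_iterate, Function.iterate_id]
  refine Prod.ext ?_ ?_ <;>
    simp only [Prod.map_fst, Prod.map_snd, id, ← Function.iterate_add_apply] <;> congr 1 <;> omega

namespace RegularRel

variable {R S : ℕ → ℕ → Prop}

theorem of_isRegular {K : Language (Fin 3)} (hK : K.IsRegular)
    (h : ∀ m n, R m n ↔ convWord m n ∈ K) : RegularRel R := by
  have : convLang R = convLang (fun _ _ => True) ⊓ K := by
    ext w
    constructor
    · rintro ⟨m, n, hR, rfl⟩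
      exact ⟨⟨m, n, trivial, rfl⟩, (h m n).1 hR⟩
    · rintro ⟨⟨m, n, -, rfl⟩, hw⟩
      exact ⟨m, n, (h m n).2 hw, rfl⟩
  rw [RegularRel, this]
  exact isRegular_convLang_top.inf hK

theorem of_iff (hR : RegularRel R) (h : ∀ m n, R m n ↔ S m n) : RegularRel S :=
  funext₂ (fun m n => propext (h m n)) ▸ hR

theorem inf (hR : RegularRel R) (hS : RegularRel S) : RegularRel fun m n => R m n ∧ S m n :=
  of_isRegular (Language.IsRegular.inf hR hS) fun _ _ =>
    (and_congr convWord_mem_convLang convWord_mem_convLang).symm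

theorem sup (hR : RegularRel R) (hS : RegularRel S) : RegularRel fun m n => R m n ∨ S m n :=
  of_isRegular (Language.IsRegular.add hR hS) fun _ _ => by
    rw [Language.mem_add, convWord_mem_convLang, convWord_mem_convLang]

theorem swap (hR : RegularRel R) : RegularRel fun m n => R n m :=
  of_isRegular (Language.IsRegular.preimage_map (Equiv.swap (1 : Fin 3) 2) hR) fun m n => by
    change R n m ↔ (convWord m n).map (Equiv.swap (1 : Fin 3) 2) ∈ convLang R
    rw [map_swap_convWord, convWord_mem_convLang]

end RegularRel

theorem regularRel_lt : RegularRel (· < ·) :=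
  .of_isRegular (Language.isRegular_setOf_mem 2) fun m n => by
    change m < n ↔ 2 ∈ convWord m n
    simp [convWord, Nat.sub_eq_zero_iff_le]

theorem regularRel_mem_and_mem {A B : Set ℕ} (hA : (unaryLang A).IsRegular)
    (hB : (unaryLang B).IsRegular) : RegularRel fun m n => m ∈ A ∧ n ∈ B := by
  obtain ⟨σ₁, _, M₁, hM₁⟩ := hA
  obtain ⟨σ₂, _, M₂, hM₂⟩ := hB
  refine .of_isRegular ⟨_, inferInstance, convPairDFA M₁ M₂, rfl⟩ fun m n => ?_
  rw [DFA.mem_accepts, convPairDFA_eval_convWord, ← replicate_mem_unaryLang (L := A),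
    ← replicate_mem_unaryLang (L := B), ← hM₁, ← hM₂]
  rfl

theorem RegularRel.isRegular_unaryLang_exists_lt {R : ℕ → ℕ → Prop} (hR : RegularRel R) :
    (unaryLang {n | ∃ m < n, R m n}).IsRegular := by
  -- for `m < n` the word `convWord m n` has length `n`
  have : unaryLang {n | ∃ m < n, R m n} =
      Language.map (fun _ => ()) (convLang fun m n => R m n ∧ m < n) := by
    ext w
    change (∃ m < w.length, R m w.length) ↔ w ∈ List.map _ '' _
    constructor
    · rintro ⟨m, hm, hR⟩
      refine ⟨convWord m w.length, ⟨m, w.length, ⟨hR, hm⟩, rfl⟩, ?_⟩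
      exact List.ext_getElem (by simp [length_convWord, hm.le]) fun _ _ _ => rfl
    · rintro ⟨_, ⟨m, n, ⟨hR, hmn⟩, rfl⟩, rfl⟩
      rw [List.length_map, length_convWord, max_eq_right hmn.le]
      exact ⟨m, hmn, hR⟩
  rw [this]
  exact (hR.inf regularRel_lt).map _

namespace UnaryFAPresentable

variable {X : Type*}

theorem exists_injOn {ρ : X → X → Prop} (h : UnaryFAPresentable ρ) :
    ∃ L : Set ℕ, (unaryLang L).IsRegular ∧ ∃ φ : ℕ → X, (∀ x, ∃ n ∈ L, φ n = x) ∧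
      Set.InjOn φ L ∧ RegularRel (fun m n => m ∈ L ∧ n ∈ L ∧ φ m = φ n) ∧
      RegularRel (fun m n => m ∈ L ∧ n ∈ L ∧ ρ (φ m) (φ n)) := by
  obtain ⟨L, hL, φ, hφ, hE, hρ⟩ := h
  set L' := L \ {n | ∃ m < n, m ∈ L ∧ n ∈ L ∧ φ m = φ n}
  have hL' : (unaryLang L').IsRegular := hL.inf hE.isRegular_unaryLang_exists_lt.compl
  have restrict : ∀ {P : ℕ → ℕ → Prop}, RegularRel (fun m n => m ∈ L ∧ n ∈ L ∧ P m n) →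
      RegularRel (fun m n => m ∈ L' ∧ n ∈ L' ∧ P m n) := fun hP =>
    (hP.inf (regularRel_mem_and_mem hL' hL')).of_iff fun m n =>
      ⟨fun ⟨⟨_, _, h⟩, hm, hn⟩ => ⟨hm, hn, h⟩, fun ⟨hm, hn, h⟩ => ⟨⟨hm.1, hn.1, h⟩, hm, hn⟩⟩
  refine ⟨L', hL', φ, fun x => ?_, ?_, restrict hE, restrict hρ⟩
  · classical
    have hx : ∃ n, n ∈ L ∧ φ n = x := by simpa using hφ x
    refine ⟨Nat.find hx, ⟨(Nat.find_spec hx).1, ?_⟩, (Nat.find_spec hx).2⟩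
    rintro ⟨m, hm, hmL, -, hφm⟩
    exact Nat.find_min hx hm ⟨hmL, hφm.trans (Nat.find_spec hx).2⟩
  · intro m hm n hn hφ
    by_contra hne
    rcases lt_or_gt_of_ne hne with hlt | hlt
    · exact hn.2 ⟨m, hlt, hm.1, hn.1, hφ⟩
    · exact hm.2 ⟨n, hlt, hn.1, hm.1, hφ.symm⟩

theorem exists_orientation {σ : X → X → Prop} (hs : Symmetric σ) (hi : Irreflexive σ)
    (h : UnaryFAPresentable σ) :
    ∃ η : X → X → Prop, (∀ x y, σ x y ↔ (η x y ∨ η y x)) ∧ (∀ x y, ¬ (η x y ∧ η y x)) ∧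
      UnaryFAPresentable η := by
  obtain ⟨L, hL, φ, hφ, hinj, hE, hσ⟩ := h.exists_injOn
  set ι := Function.invFunOn φ L
  have hφι : ∀ x, φ (ι x) = x := fun x => Function.invFunOn_eq (hφ x)
  have hιφ : ∀ n ∈ L, ι (φ n) = n := fun n hn => hinj.leftInvOn_invFunOn hn
  refine ⟨fun x y => σ x y ∧ ι x < ι y, fun x y => ⟨fun hxy => ?_, ?_⟩,
    fun x y ⟨⟨_, hxy⟩, ⟨_, hyx⟩⟩ => lt_asymm hxy hyx, L, hL, φ, hφ, hE, ?_⟩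
  · have hne : ι x ≠ ι y := fun h => hi x (by rwa [← hφι y, ← h, hφι] at hxy)
    exact (lt_or_gt_of_ne hne).imp (⟨hxy, ·⟩) (⟨hs hxy, ·⟩)
  · rintro (⟨hxy, -⟩ | ⟨hyx, -⟩)
    exacts [hxy, hs hyx]
  · refine (hσ.inf regularRel_lt).of_iff fun m n => ?_
    constructor
    · rintro ⟨⟨hm, hn, hmn⟩, hlt⟩
      exact ⟨hm, hn, hmn, by rwa [hιφ m hm, hιφ n hn]⟩
    · rintro ⟨hm, hn, hmn, hlt⟩
      exact ⟨⟨hm, hn, hmn⟩, by rwa [hιφ m hm, hιφ n hn] at hlt⟩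

theorem symmClosure {η : X → X → Prop} (h : UnaryFAPresentable η) :
    UnaryFAPresentable fun x y => η x y ∨ η y x := by
  obtain ⟨L, hL, φ, hφ, hE, hη⟩ := h
  exact ⟨L, hL, φ, hφ, hE, (hη.sup hη.swap).of_iff fun m n => by tauto⟩

end UnaryFAPresentable

theorem stmt18_general {X : Type*} (σ : X → X → Prop)
    (hs : Symmetric σ) (hi : Irreflexive σ) :
    UnaryFAPresentable σ ↔
      ∃ η : X → X → Prop,
        (∀ x y, σ x y ↔ (η x y ∨ η y x)) ∧
        (∀ x y, ¬ (η x y ∧ η y x)) ∧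
        UnaryFAPresentable η := by
  refine ⟨UnaryFAPresentable.exists_orientation hs hi, ?_⟩
  rintro ⟨η, hση, -, hη⟩
  rw [show σ = fun x y => η x y ∨ η y x from funext₂ fun x y => propext (hση x y)]
  exact hη.symmClosure

theorem stmt18 {X : Type*} [Countable X] (σ : X → X → Prop)
    (hs : Symmetric σ) (hi : Irreflexive σ)
    (hacyc : (symGraph σ hs hi).IsAcyclic) :
    UnaryFAPresentable σ ↔
      ∃ η : X → X → Prop,
        (∀ x y, σ x y ↔ (η x y ∨ η y x)) ∧
        (∀ x y, ¬ (η x y ∧ η y x)) ∧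
        UnaryFAPresentable η :=
  stmt18_general σ hs hi
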